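/- Let G be a finite simple graph and a, b two nonadjacent vertices of G. If a and b have no common neighbor in G (S_{a,b} = ∅), or if S_{a,b} ≠ ∅ and k_min((a,b)) > |S_{a,b}| + 1, then inserting the edge (a,b) affects no existing edge: for every edge e' of G, φ_{G+(a,b)}(e') = φ_G(e'). -/

import Mathlib

open SimpleGraph

variable {V : Type*}

/-- `H` is a `k`-truss of `G`: a connected subgraph with at least one edge in which
every edge lies in at least `k - 2` triangles of `H` (i.e. the endpoints of every edge
have at least `k - 2` common neighbors in `H`). -/
def IsTruss (G : SimpleGraph V) (k : ℕ) (H : G.Subgraph) : Prop :=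
  H.Connected ∧ H.edgeSet.Nonempty ∧
    ∀ a b : V, H.Adj a b → k - 2 ≤ {c : V | H.Adj a c ∧ H.Adj b c}.ncard

/-- The truss number `φ_G(e)` of an edge `e`: the largest `k` such that `e` lies in some
`k`-truss of `G`. -/
noncomputable def trussNumber (G : SimpleGraph V) (e : Sym2 V) : ℕ :=
  sSup {k : ℕ | ∃ H : G.Subgraph, IsTruss G k H ∧ e ∈ H.edgeSet}

/-- The support of the edge `(a, b)` in a subgraph `H`: the number of triangles of `H`
containing it, i.e. the number of common neighbors of `a` and `b` in `H`. -/
noncomputable def suppIn {G : SimpleGraph V} (H : G.Subgraph) (a b : V) : ℕ :=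
  {c : V | H.Adj a c ∧ H.Adj b c}.ncard

/-- The support of the edge `(a, b)` in `G`. -/
noncomputable def suppG (G : SimpleGraph V) (a b : V) : ℕ :=
  {c : V | G.Adj a c ∧ G.Adj b c}.ncard

/-- `S_{a,b}`: the common neighbors of `a` and `b` in `G`. -/
def commonNbrs (G : SimpleGraph V) (a b : V) : Set V :=
  {c : V | G.Adj a c ∧ G.Adj b c}

/-- `E_{S_{a,b} ↔ {a,b}}`: the edges of `G` joining a common neighbor of `a` and `b`
to `a` or to `b`. -/
def sideEdges (G : SimpleGraph V) (a b : V) : Set (Sym2 V) :=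
  {e | ∃ c, G.Adj a c ∧ G.Adj b c ∧ (e = s(a, c) ∨ e = s(b, c))}

/-- `k_min((a,b))`: minimum truss number among the edges of `E_{S_{a,b} ↔ {a,b}}`. -/
noncomputable def kmin (G : SimpleGraph V) (a b : V) : ℕ :=
  sInf (trussNumber G '' sideEdges G a b)

/-- `k_max((a,b))`: maximum truss number among the edges of `E_{S_{a,b} ↔ {a,b}}`. -/
noncomputable def kmax (G : SimpleGraph V) (a b : V) : ℕ :=
  sSup (trussNumber G '' sideEdges G a b)

/-- `G + (a,b)`: the graph obtained from `G` by inserting the edge `(a, b)`. -/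
def insertEdge (G : SimpleGraph V) (a b : V) : SimpleGraph V :=
  G ⊔ fromEdgeSet {s(a, b)}

/-! Let `H` be a `k`-truss of `G + (a,b)` through an edge `e` of `G`, with `k ≥ 3`. Deleting `(a,b)`
from `H` keeps it connected (a common neighbour of `a` and `b` in `H` gives a detour) and only
destroys triangles `a b c` with `c ∈ S_{a,b}`. If `(a,b) ∈ H`, then `k - 2 ≤ |S_{a,b}|`, so the
hypothesis gives `k ≤ k_min((a,b))`: every side edge `ac`, `bc` lies in a `k`-truss of `G`, and
gluing these trusses onto `H - (a,b)` yields a `k`-truss of `G` through `e`. -/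

namespace SimpleGraph.Subgraph

variable {G G' : SimpleGraph V}

def liftOfLE (hle : G ≤ G') (H : G.Subgraph) : G'.Subgraph where
  verts := H.verts
  Adj := H.Adj
  adj_sub h := hle (H.adj_sub h)
  edge_vert := H.edge_vert
  symm := H.symm

lemma connected_comap_ofLE (hle : G ≤ G') {H : G'.Subgraph} (hH : H.Connected)
    (hdetour : ∀ x y, H.Adj x y → ¬ G.Adj x y →
      ∃ z, H.Adj x z ∧ H.Adj z y ∧ G.Adj x z ∧ G.Adj z y) :
    (H.comap (Hom.ofLE hle)).Connected := by
  rw [Subgraph.connected_iff] at hH ⊢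
  refine ⟨⟨fun u v => ?_⟩, hH.2⟩
  rw [reachable_iff_reflTransGen]
  refine Relation.reflTransGen_closed (p := (H.comap (Hom.ofLE hle)).coe.Adj) ?_ _ _
    ((reachable_iff_reflTransGen _ _).mp (hH.1 u v))
  rintro ⟨x, hx⟩ ⟨y, hy⟩ hxy
  by_cases hG : G.Adj x y
  · exact .single ⟨hG, hxy⟩
  · obtain ⟨z, hxz, hzy, hGxz, hGzy⟩ := hdetour x y hxy hG
    let w : (H.comap (Hom.ofLE hle)).verts := ⟨z, H.edge_vert hzy⟩
    exact .tail (b := w) (.single ⟨hGxz, hxz⟩) ⟨hGzy, hzy⟩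

lemma connected_sup_iSup {ι : Type*} {H : G.Subgraph} {F : ι → G.Subgraph}
    (hH : H.Connected) (hF : ∀ i, (F i).Connected) (hmeet : ∀ i, (H ⊓ F i).verts.Nonempty) :
    (H ⊔ ⨆ i, F i).Connected := by
  rw [Subgraph.connected_iff', connected_iff_exists_forall_reachable]
  obtain ⟨u, hu⟩ := hH.nonempty
  have hfromH : ∀ w (hw : w ∈ H.verts), (H ⊔ ⨆ i, F i).coe.Reachable ⟨u, .inl hu⟩ ⟨w, .inl hw⟩ :=
    fun w hw => (hH ⟨u, hu⟩ ⟨w, hw⟩).map (inclusion le_sup_left)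
  refine ⟨⟨u, .inl hu⟩, ?_⟩
  rintro ⟨v, hv | hv⟩
  · exact hfromH v hv
  · obtain ⟨i, hi⟩ := Set.mem_iUnion.mp (verts_iSup ▸ hv)
    obtain ⟨w, hwH, hwF⟩ := hmeet i
    exact (hfromH w hwH).trans
      ((hF i ⟨w, hwF⟩ ⟨v, hi⟩).map (inclusion (le_sup_of_le_right (le_iSup F i))))

end SimpleGraph.Subgraph

section Truss

variable {G G' : SimpleGraph V} {k : ℕ} {e : Sym2 V}

lemma IsTruss.of_le {j : ℕ} {H : G.Subgraph} (hjk : j ≤ k) (hH : IsTruss G k H) :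
    IsTruss G j H :=
  ⟨hH.1, hH.2.1, fun a b hab => (Nat.sub_le_sub_right hjk 2).trans (hH.2.2 a b hab)⟩

lemma suppIn_mono [Finite V] {H K : G.Subgraph} (hHK : H ≤ K) (x y : V) :
    suppIn H x y ≤ suppIn K x y :=
  Set.ncard_le_ncard (fun _ hz => ⟨hHK.2 hz.1, hHK.2 hz.2⟩) (Set.toFinite _)

lemma IsTruss.liftOfLE (hle : G ≤ G') {H : G.Subgraph} (hH : IsTruss G k H) :
    IsTruss G' k (H.liftOfLE hle) :=
  ⟨⟨hH.1.coe⟩, hH.2.1, hH.2.2⟩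

lemma bddAbove_trusses [Finite V] (G : SimpleGraph V) (e : Sym2 V) :
    BddAbove {k | ∃ H : G.Subgraph, IsTruss G k H ∧ e ∈ H.edgeSet} := by
  refine ⟨Nat.card V + 2, ?_⟩
  rintro k ⟨H, hH, he⟩
  induction e using Sym2.ind with
  | _ x y =>
    have := (hH.2.2 x y he).trans (Set.ncard_le_card _)
    omega

lemma le_trussNumber [Finite V] {H : G.Subgraph} (hH : IsTruss G k H) (he : e ∈ H.edgeSet) :
    k ≤ trussNumber G e :=
  le_csSup (bddAbove_trusses G e) ⟨H, hH, he⟩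

lemma isTruss_subgraphOfAdj {x y : V} (hxy : G.Adj x y) : IsTruss G 2 (G.subgraphOfAdj hxy) :=
  ⟨Subgraph.subgraphOfAdj_connected hxy, ⟨s(x, y), by simp⟩, fun _ _ _ => by simp⟩

lemma two_le_trussNumber [Finite V] (he : e ∈ G.edgeSet) : 2 ≤ trussNumber G e := by
  induction e using Sym2.ind with
  | _ x y =>
    have hxy : G.Adj x y := he
    exact le_trussNumber (isTruss_subgraphOfAdj hxy) (by simp)

lemma exists_isTruss_of_le_trussNumber [Finite V] (he : e ∈ G.edgeSet)
    (hk : k ≤ trussNumber G e) : ∃ H : G.Subgraph, IsTruss G k H ∧ e ∈ H.edgeSet := by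
  induction e using Sym2.ind with
  | _ x y =>
    have hxy : G.Adj x y := he
    obtain ⟨H, hH, heH⟩ : trussNumber G s(x, y) ∈ _ :=
      Nat.sSup_mem ⟨2, _, isTruss_subgraphOfAdj hxy, by simp⟩ (bddAbove_trusses G s(x, y))
    exact ⟨H, hH.of_le hk, heH⟩

lemma trussNumber_mono [Finite V] (hle : G ≤ G') (e : Sym2 V) :
    trussNumber G e ≤ trussNumber G' e := by
  refine csSup_le' fun k ⟨H, hH, he⟩ => ?_
  exact le_trussNumber (hH.liftOfLE hle) he

end Truss

section InsertEdge

variable {G G' : SimpleGraph V} {a b : V}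

lemma le_insertEdge (G : SimpleGraph V) (a b : V) : G ≤ insertEdge G a b := le_sup_left

lemma adj_of_insertEdge_adj {x y : V} (h : (insertEdge G a b).Adj x y)
    (hne : s(x, y) ≠ s(a, b)) : G.Adj x y := by
  simpa [insertEdge, hne] using h

lemma commonNbrs_mono (hle : G ≤ G') (a b : V) : commonNbrs G a b ⊆ commonNbrs G' a b :=
  fun _ hc => ⟨hle hc.1, hle hc.2⟩

lemma sideEdges_mono (hle : G ≤ G') (a b : V) : sideEdges G a b ⊆ sideEdges G' a b :=
  fun _ ⟨c, hac, hbc, he⟩ => ⟨c, hle hac, hle hbc, he⟩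

lemma sideEdges_subset_edgeSet (G : SimpleGraph V) (a b : V) :
    sideEdges G a b ⊆ G.edgeSet := by
  rintro _ ⟨c, hac, hbc, rfl | rfl⟩
  exacts [hac, hbc]

lemma commonNbrs_insertEdge (G : SimpleGraph V) (a b : V) :
    commonNbrs (insertEdge G a b) a b = commonNbrs G a b := by
  refine (commonNbrs_mono (le_insertEdge G a b) a b).antisymm' fun c ⟨hac, hbc⟩ => ?_
  refine ⟨adj_of_insertEdge_adj hac ?_, adj_of_insertEdge_adj hbc ?_⟩
  · rw [Ne, Sym2.congr_right]
    exact hbc.ne.symm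
  · rw [Ne, Sym2.eq_swap (a := a), Sym2.congr_right]
    exact hac.ne.symm

lemma sideEdges_insertEdge (G : SimpleGraph V) (a b : V) :
    sideEdges (insertEdge G a b) a b = sideEdges G a b := by
  refine (sideEdges_mono (le_insertEdge G a b) a b).antisymm' fun e ⟨c, hac, hbc, he⟩ => ?_
  obtain ⟨hac, hbc⟩ : c ∈ commonNbrs G a b := commonNbrs_insertEdge G a b ▸ ⟨hac, hbc⟩
  exact ⟨c, hac, hbc, he⟩

lemma mem_sideEdges_of_path {p q z : V} (hpq : G.Adj p q) (hqz : G.Adj q z)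
    (hpz : s(p, z) = s(a, b)) : s(p, q) ∈ sideEdges G a b := by
  rcases Sym2.eq_iff.mp hpz with ⟨rfl, rfl⟩ | ⟨rfl, rfl⟩
  · exact ⟨q, hpq, hqz.symm, .inl rfl⟩
  · exact ⟨q, hqz.symm, hpq, .inr rfl⟩

end InsertEdge

section DeleteInsertedEdge

variable {G : SimpleGraph V} {a b : V} {H : (insertEdge G a b).Subgraph}

lemma suppIn_le_suppIn_comap_insertEdge [Finite V] {p q : V} (hpq : H.Adj p q)
    (hlost : ¬ (H.Adj a b ∧ s(p, q) ∈ sideEdges H.spanningCoe a b)) :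
    suppIn H p q ≤ suppIn (H.comap (Hom.ofLE (le_insertEdge G a b))) p q := by
  refine Set.ncard_le_ncard (fun z ⟨hpz, hqz⟩ => ⟨⟨?_, hpz⟩, ⟨?_, hqz⟩⟩) (Set.toFinite _)
  · refine adj_of_insertEdge_adj (H.adj_sub hpz) fun h =>
      hlost ⟨(H.adj_congr_of_sym2 h).mp hpz, ?_⟩
    exact mem_sideEdges_of_path (G := H.spanningCoe) hpq hqz h
  · refine adj_of_insertEdge_adj (H.adj_sub hqz) fun h =>
      hlost ⟨(H.adj_congr_of_sym2 h).mp hqz, ?_⟩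
    rw [Sym2.eq_swap]
    exact mem_sideEdges_of_path (G := H.spanningCoe) hpq.symm hpz h

lemma connected_comap_insertEdge (hH : H.Connected)
    (hab : H.Adj a b → ∃ c, H.Adj a c ∧ H.Adj b c) :
    (H.comap (Hom.ofLE (le_insertEdge G a b))).Connected := by
  refine Subgraph.connected_comap_ofLE _ hH fun x y hxy hG => ?_
  have hxy_ab : s(x, y) = s(a, b) := by
    by_contra hne
    exact hG (adj_of_insertEdge_adj (H.adj_sub hxy) hne)
  obtain ⟨c, hac, hbc⟩ := hab ((H.adj_congr_of_sym2 hxy_ab).mp hxy)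
  obtain ⟨hGac, hGbc⟩ : c ∈ commonNbrs G a b :=
    commonNbrs_insertEdge G a b ▸ ⟨H.adj_sub hac, H.adj_sub hbc⟩
  rcases Sym2.eq_iff.mp hxy_ab with ⟨rfl, rfl⟩ | ⟨rfl, rfl⟩
  · exact ⟨c, hac, hbc.symm, hGac, hGbc.symm⟩
  · exact ⟨c, hbc, hac.symm, hGbc, hGac.symm⟩

lemma le_trussNumber_of_isTruss_insertEdge [Finite V] {k : ℕ} {e : Sym2 V}
    (hH : IsTruss (insertEdge G a b) k H) (hk : 3 ≤ k)
    (hside : H.Adj a b → ∀ e' ∈ sideEdges H.spanningCoe a b, k ≤ trussNumber G e')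
    (he : e ∈ H.edgeSet) (heG : e ∈ G.edgeSet) : k ≤ trussNumber G e := by
  set H₀ := H.comap (Hom.ofLE (le_insertEdge G a b))
  have mem_H₀ : ∀ f ∈ H.edgeSet, f ∈ G.edgeSet → f ∈ H₀.edgeSet := by
    intro f
    induction f using Sym2.ind with
    | _ x y => exact fun hH hG => ⟨hG, hH⟩
  have hH₀ : H₀.Connected := connected_comap_insertEdge hH.1 fun hab =>
    Set.nonempty_of_ncard_ne_zero (s := {c | H.Adj a c ∧ H.Adj b c})
      (by have := hH.2.2 a b hab; omega)
  let ι := {e' // H.Adj a b ∧ e' ∈ sideEdges H.spanningCoe a b}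
  have hι : ∀ i : ι, i.1 ∈ G.edgeSet ∧ i.1 ∈ H₀.edgeSet ∧ k ≤ trussNumber G i.1 := by
    intro ⟨e', hab, he'⟩
    have heG' : e' ∈ G.edgeSet := sideEdges_subset_edgeSet G a b <|
      sideEdges_insertEdge G a b ▸ sideEdges_mono H.spanningCoe_le a b he'
    refine ⟨heG', mem_H₀ e' ?_ heG', hside hab e' he'⟩
    exact H.edgeSet_spanningCoe ▸ sideEdges_subset_edgeSet _ a b he'
  choose K hK hiK using fun i : ι => exists_isTruss_of_le_trussNumber (hι i).1 (hι i).2.2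
  have hKT : ∀ i, K i ≤ H₀ ⊔ ⨆ i, K i := fun i => le_sup_of_le_right (le_iSup K i)
  have heT : e ∈ (H₀ ⊔ ⨆ i, K i).edgeSet := Subgraph.edgeSet_mono le_sup_left (mem_H₀ e he heG)
  refine le_trussNumber ⟨?_, ⟨e, heT⟩, fun p q hpq => ?_⟩ heT
  · refine Subgraph.connected_sup_iSup hH₀ (fun i => (hK i).1) fun i => ⟨(i.1).out.1, ?_, ?_⟩
    · exact Subgraph.mem_verts_of_mem_edge (hι i).2.1 (Sym2.out_fst_mem _)
    · exact Subgraph.mem_verts_of_mem_edge (hiK i) (Sym2.out_fst_mem _)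
  · rcases Subgraph.sup_adj.mp hpq with hpq | hpq
    · by_cases hlost : H.Adj a b ∧ s(p, q) ∈ sideEdges H.spanningCoe a b
      · exact ((hK ⟨_, hlost⟩).2.2 p q (hiK ⟨_, hlost⟩)).trans (suppIn_mono (hKT _) p q)
      · exact (hH.2.2 p q hpq.2).trans <| (suppIn_le_suppIn_comap_insertEdge hpq.2 hlost).trans
          (suppIn_mono le_sup_left p q)
    · obtain ⟨i, hi⟩ := Subgraph.iSup_adj.mp hpq
      exact ((hK i).2.2 p q hi).trans (suppIn_mono (hKT i) p q)

end DeleteInsertedEdge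

theorem stmt12_general [Fintype V] (G : SimpleGraph V) (a b : V)
    (h : commonNbrs G a b = ∅ ∨
      (commonNbrs G a b ≠ ∅ ∧ (commonNbrs G a b).ncard + 1 < kmin G a b)) :
    ∀ e' ∈ G.edgeSet, trussNumber (insertEdge G a b) e' = trussNumber G e' := by
  intro e he
  refine le_antisymm (csSup_le' ?_) (trussNumber_mono (le_insertEdge G a b) e)
  rintro k ⟨H, hH, heH⟩
  rcases le_or_gt k 2 with hk | hk
  · exact hk.trans (two_le_trussNumber he)
  refine le_trussNumber_of_isTruss_insertEdge hH hk (fun hab e' he' => ?_) heH he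
  have hS_H : commonNbrs H.spanningCoe a b ⊆ commonNbrs G a b :=
    commonNbrs_insertEdge G a b ▸ commonNbrs_mono H.spanningCoe_le a b
  have hsupp : k - 2 ≤ (commonNbrs H.spanningCoe a b).ncard := hH.2.2 a b hab
  rcases h with hS | ⟨-, hkmin⟩
  · obtain ⟨c, hc⟩ := Set.nonempty_of_ncard_ne_zero (s := commonNbrs H.spanningCoe a b) (by omega)
    exact absurd (hS_H hc) (hS ▸ Set.notMem_empty c)
  calc k ≤ (commonNbrs G a b).ncard + 2 := by
        have := Set.ncard_le_ncard hS_H (Set.toFinite _)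
        omega
    _ ≤ kmin G a b := by omega
    _ ≤ trussNumber G e' :=
        Nat.sInf_le ⟨e', sideEdges_insertEdge G a b ▸ sideEdges_mono H.spanningCoe_le a b he', rfl⟩

theorem stmt12 [Fintype V] (G : SimpleGraph V) (a b : V) (hab : a ≠ b)
    (hnadj : ¬ G.Adj a b)
    (h : commonNbrs G a b = ∅ ∨
      (commonNbrs G a b ≠ ∅ ∧ (commonNbrs G a b).ncard + 1 < kmin G a b)) :
    ∀ e' ∈ G.edgeSet, trussNumber (insertEdge G a b) e' = trussNumber G e' :=
  stmt12_general G a b h
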